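/- arXiv:2105.04699 — 2 statements merged into one kernel-verified Lean document; each statement's English description precedes it below -/
import Mathlib

section
/- (Simulation lemma, ∞-norm version.) Let M* and M̂ be two MDPs over a finite state space S and action space A that share the same reward function r : S×A → [0,1] and discount factor γ ∈ (0,1), but have transition kernels p* and p̂ satisfying max_{s,a} ‖p̂(·|s,a) - p*(·|s,a)‖₁ ≤ ε. Then for any fixed policy π, the value functions satisfy ‖V^π_{M*} - V^π_{M̂}‖_∞ ≤ γε/(1-γ)². -/
/-!
Writing `P, Q` for the two transition matrices under `π`, subtracting the Bellman equations gives
`V - W = γ P (V - W) + γ (P - Q) W`. A stochastic matrix does not increase the sup norm and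
`‖(P - Q) W‖ ≤ ε ‖W‖`, so `‖V - W‖ ≤ γ ‖V - W‖ + γ ε ‖W‖`, i.e. `‖V - W‖ ≤ γ ε ‖W‖ / (1 - γ)`.
The same contraction argument applied to `W = c + γ Q W` gives `‖W‖ ≤ ‖c‖ / (1 - γ) ≤ 1 / (1 - γ)`.
-/

section Bellman

variable {S : Type*} [Fintype S]

theorem abs_sum_mul_le_sum_abs_mul_norm (q f : S → ℝ) :
    |∑ s, q s * f s| ≤ (∑ s, |q s|) * ‖f‖ :=
  calc |∑ s, q s * f s| ≤ ∑ s, |q s * f s| := Finset.abs_sum_le_sum_abs _ _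
    _ ≤ ∑ s, |q s| * ‖f‖ := Finset.sum_le_sum fun s _ => by
        rw [abs_mul]
        exact mul_le_mul_of_nonneg_left (norm_le_pi_norm f s) (abs_nonneg _)
    _ = (∑ s, |q s|) * ‖f‖ := (Finset.sum_mul _ _ _).symm

theorem abs_sum_mul_le_norm_of_stochastic {p : S → ℝ} (hp0 : ∀ s, 0 ≤ p s)
    (hp1 : ∑ s, p s = 1) (f : S → ℝ) : |∑ s, p s * f s| ≤ ‖f‖ := by
  simpa [abs_of_nonneg (hp0 _), hp1] using abs_sum_mul_le_sum_abs_mul_norm p f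

theorem norm_le_div_one_sub_of_abs_le {a γ : ℝ} (ha : 0 ≤ a) (hγ0 : 0 ≤ γ) (hγ1 : γ < 1)
    {f : S → ℝ} (hf : ∀ s, |f s| ≤ a + γ * ‖f‖) : ‖f‖ ≤ a / (1 - γ) := by
  have hself : ‖f‖ ≤ a + γ * ‖f‖ :=
    (pi_norm_le_iff_of_nonneg (by positivity)).2 fun s => (Real.norm_eq_abs _).le.trans (hf s)
  rw [le_div_iff₀ (by linarith)]
  linarith

variable {γ : ℝ} (hγ0 : 0 ≤ γ) (hγ1 : γ < 1) {c : S → ℝ}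
include hγ0 hγ1

theorem norm_le_of_bellman {P : S → S → ℝ} (hP0 : ∀ s s', 0 ≤ P s s')
    (hP1 : ∀ s, ∑ s', P s s' = 1) {V : S → ℝ}
    (hV : ∀ s, V s = c s + γ * ∑ s', P s s' * V s') : ‖V‖ ≤ ‖c‖ / (1 - γ) := by
  refine norm_le_div_one_sub_of_abs_le (norm_nonneg c) hγ0 hγ1 fun s => ?_
  rw [hV s]
  calc |c s + γ * ∑ s', P s s' * V s'| ≤ |c s| + γ * |∑ s', P s s' * V s'| := by
        simpa [abs_mul, abs_of_nonneg hγ0] using abs_add_le (c s) (γ * ∑ s', P s s' * V s')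
    _ ≤ ‖c‖ + γ * ‖V‖ := by
        gcongr
        · exact norm_le_pi_norm c s
        · exact abs_sum_mul_le_norm_of_stochastic (hP0 s) (hP1 s) V

theorem norm_sub_le_of_bellman {ε : ℝ} (hε : 0 ≤ ε) {P Q : S → S → ℝ}
    (hP0 : ∀ s s', 0 ≤ P s s') (hP1 : ∀ s, ∑ s', P s s' = 1)
    (hPQ : ∀ s, ∑ s', |Q s s' - P s s'| ≤ ε) {V W : S → ℝ}
    (hV : ∀ s, V s = c s + γ * ∑ s', P s s' * V s')
    (hW : ∀ s, W s = c s + γ * ∑ s', Q s s' * W s') :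
    ‖V - W‖ ≤ γ * ε * ‖W‖ / (1 - γ) := by
  refine norm_le_div_one_sub_of_abs_le (by positivity) hγ0 hγ1 fun s => ?_
  have hsplit : (V - W) s = γ * (∑ s', P s s' * (V - W) s' + ∑ s', (P s s' - Q s s') * W s') := by
    have hsum : ∑ s', P s s' * (V - W) s' + ∑ s', (P s s' - Q s s') * W s'
        = ∑ s', P s s' * V s' - ∑ s', Q s s' * W s' := by
      rw [← Finset.sum_add_distrib, ← Finset.sum_sub_distrib]
      exact Finset.sum_congr rfl fun _ _ => by simp only [Pi.sub_apply]; ring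
    rw [hsum, Pi.sub_apply, hV s, hW s]
    ring
  have hdiff : |∑ s', (P s s' - Q s s') * W s'| ≤ ε * ‖W‖ := by
    refine (abs_sum_mul_le_sum_abs_mul_norm _ W).trans (mul_le_mul_of_nonneg_right ?_ (norm_nonneg W))
    simpa only [abs_sub_comm] using hPQ s
  rw [hsplit, abs_mul, abs_of_nonneg hγ0]
  calc γ * |∑ s', P s s' * (V - W) s' + ∑ s', (P s s' - Q s s') * W s'|
      ≤ γ * (‖V - W‖ + ε * ‖W‖) := by
        gcongr
        exact (abs_add_le _ _).trans
          (add_le_add (abs_sum_mul_le_norm_of_stochastic (hP0 s) (hP1 s) _) hdiff)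
    _ = γ * ε * ‖W‖ + γ * ‖V - W‖ := by ring

end Bellman

theorem stmt_3_general {S A : Type*} [Fintype S]
    (γ ε : ℝ) (hγ0 : 0 < γ) (hγ1 : γ < 1) (hε : 0 ≤ ε)
    (r : S → A → ℝ) (hr : ∀ s a, r s a ∈ Set.Icc (0 : ℝ) 1)
    (pstar phat : S → A → S → ℝ)
    (hpstar_nonneg : ∀ s a s', 0 ≤ pstar s a s')
    (hpstar_sum : ∀ s a, ∑ s', pstar s a s' = 1)
    (hphat_nonneg : ∀ s a s', 0 ≤ phat s a s')
    (hphat_sum : ∀ s a, ∑ s', phat s a s' = 1)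
    (hclose : ∀ s a, ∑ s', |phat s a s' - pstar s a s'| ≤ ε)
    (π : S → A) (Vstar Vhat : S → ℝ)
    (hVstar : ∀ s, Vstar s = r s (π s) + γ * ∑ s', pstar s (π s) s' * Vstar s')
    (hVhat : ∀ s, Vhat s = r s (π s) + γ * ∑ s', phat s (π s) s' * Vhat s') :
    ‖Vstar - Vhat‖ ≤ γ * ε / (1 - γ) ^ 2 := by
  have h1γ : 0 < 1 - γ := sub_pos.2 hγ1
  have hreward : ‖fun s => r s (π s)‖ ≤ 1 :=
    (pi_norm_le_iff_of_nonneg zero_le_one).2 fun s => by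
      rw [Real.norm_eq_abs, abs_le]
      exact ⟨by linarith [(hr s (π s)).1], (hr s (π s)).2⟩
  have hVhat_le : ‖Vhat‖ ≤ 1 / (1 - γ) :=
    (norm_le_of_bellman hγ0.le hγ1 (fun s => hphat_nonneg s (π s)) (fun s => hphat_sum s (π s))
      hVhat).trans (div_le_div_of_nonneg_right hreward h1γ.le)
  calc ‖Vstar - Vhat‖ ≤ γ * ε * ‖Vhat‖ / (1 - γ) :=
        norm_sub_le_of_bellman hγ0.le hγ1 hε (fun s => hpstar_nonneg s (π s))
          (fun s => hpstar_sum s (π s)) (fun s => hclose s (π s)) hVstar hVhat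
    _ ≤ γ * ε * (1 / (1 - γ)) / (1 - γ) := by gcongr
    _ = γ * ε / (1 - γ) ^ 2 := by field_simp

/-- Simulation lemma, ∞-norm version: two MDPs sharing rewards in
[0,1] whose transition kernels are ε-close in L¹ have value functions (for any
fixed policy) that are γε/(1-γ)²-close in the sup norm. -/
theorem stmt_3 {S A : Type*} [Fintype S] [Nonempty S] [Fintype A]
    (γ ε : ℝ) (hγ0 : 0 < γ) (hγ1 : γ < 1) (hε : 0 ≤ ε)
    (r : S → A → ℝ) (hr : ∀ s a, r s a ∈ Set.Icc (0 : ℝ) 1)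
    (pstar phat : S → A → S → ℝ)
    (hpstar_nonneg : ∀ s a s', 0 ≤ pstar s a s')
    (hpstar_sum : ∀ s a, ∑ s', pstar s a s' = 1)
    (hphat_nonneg : ∀ s a s', 0 ≤ phat s a s')
    (hphat_sum : ∀ s a, ∑ s', phat s a s' = 1)
    (hclose : ∀ s a, ∑ s', |phat s a s' - pstar s a s'| ≤ ε)
    (π : S → A) (Vstar Vhat : S → ℝ)
    (hVstar : ∀ s, Vstar s = r s (π s) + γ * ∑ s', pstar s (π s) s' * Vstar s')
    (hVhat : ∀ s, Vhat s = r s (π s) + γ * ∑ s', phat s (π s) s' * Vhat s') :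
    ‖Vstar - Vhat‖ ≤ γ * ε / (1 - γ) ^ 2 :=
  stmt_3_general γ ε hγ0 hγ1 hε r hr pstar phat hpstar_nonneg hpstar_sum hphat_nonneg hphat_sum
    hclose π Vstar Vhat hVstar hVhat
end

section
/- (Policy gradient theorem, finite case.) For a finite MDP with discount γ ∈ (0,1) and differentiable positive policy π_θ, the gradient of the expected return η(θ) = E[∑_t γ^t r(s_t,a_t)] satisfies ∇_θ η(θ) = ∑_s d^{π_θ}(s) ∑_a Q^{π_θ}(s,a) ∇_θ π_θ(a|s), where d^{π_θ} is the discounted visitation measure and Q^{π_θ} the action-value function. -/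
/-!
Write `P_θ` for the state-to-state transition matrix of the policy `π_θ`. The Bellman equations say
`(1 - γ P_θ) V_θ = r_{π_θ}`, and `1 - γ P_θ` is strictly diagonally dominant, so `V_θ` is given by
Cramer's rule and is differentiable in `θ`. Differentiating the Bellman equations shows that
`V' = u + γ P V'` with `u s = ∑_a Q(s,a) π'(a|s)`, while the visitation measure satisfies the dual
equation `d = ρ + γ Pᵀ d`. Pairing the two gives `η' = ρ ⬝ V' = d ⬝ u`.
-/

open Finset Matrix

namespace Matrix

variable {n : Type*} [Fintype n]

theorem det_one_sub_ne_zero_of_sum_row_lt_one [DecidableEq n] {M : Matrix n n ℝ}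
    (hM : ∀ i j, 0 ≤ M i j) (hrow : ∀ i, ∑ j, M i j < 1) : (1 - M).det ≠ 0 := by
  refine det_ne_zero_of_sum_row_lt_diag fun i => ?_
  have hoff : ∀ j ∈ univ.erase i, ‖(1 - M) i j‖ = M i j := fun j hj => by
    rw [sub_apply, one_apply_ne (ne_of_mem_erase hj).symm, zero_sub, norm_neg,
      Real.norm_of_nonneg (hM i j)]
  have hdiag : M i i ≤ ∑ j, M i j := single_le_sum (fun j _ => hM i j) (mem_univ i)
  rw [sum_congr rfl hoff, sum_erase_eq_sub (mem_univ i), sub_apply, one_apply_eq,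
    Real.norm_of_nonneg (by linarith [hrow i])]
  linarith [hrow i]

theorem det_one_sub_smul_ne_zero_of_mem_rowStochastic [DecidableEq n] {γ : ℝ} (hγ0 : 0 ≤ γ)
    (hγ1 : γ < 1) {M : Matrix n n ℝ} (hM : M ∈ rowStochastic ℝ n) : (1 - γ • M).det ≠ 0 :=
  det_one_sub_ne_zero_of_sum_row_lt_one (fun _ _ => mul_nonneg hγ0 (nonneg_of_mem_rowStochastic hM))
    fun i => by
      simp only [smul_apply, smul_eq_mul, ← mul_sum, sum_row_of_mem_rowStochastic hM, mul_one, hγ1]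

theorem dotProduct_eq_of_eq_add_vecMul_of_eq_add_mulVec {R : Type*} [CommRing R]
    {M : Matrix n n R} {ρ d u v : n → R} (hd : d = ρ + d ᵥ* M) (hv : v = u + M *ᵥ v) :
    ρ ⬝ᵥ v = d ⬝ᵥ u := by
  rw [eq_sub_of_add_eq hd.symm, eq_sub_of_add_eq hv.symm, sub_dotProduct, dotProduct_sub,
    dotProduct_mulVec]

theorem vecMul_mem_stdSimplex {R : Type*} [CommSemiring R] [PartialOrder R] [IsOrderedRing R]
    [DecidableEq n] {M : Matrix n n R} (hM : M ∈ rowStochastic R n) {x : n → R}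
    (hx : x ∈ stdSimplex R n) : x ᵥ* M ∈ stdSimplex R n := by
  refine ⟨nonneg_vecMul_of_mem_rowStochastic hM hx.1, ?_⟩
  have h := vecMul_dotProduct_one_eq_one_rowStochastic hM (by rw [dotProduct_one]; exact hx.2)
  rwa [dotProduct_one] at h

section Calculus

variable {𝕜 : Type*} [NontriviallyNormedField 𝕜] [DecidableEq n]

theorem differentiable_det {B : 𝕜 → Matrix n n 𝕜}
    (hB : ∀ i j, Differentiable 𝕜 fun x => B x i j) : Differentiable 𝕜 fun x => (B x).det := by
  simp only [det_apply, Units.smul_def, zsmul_eq_mul]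
  exact Differentiable.fun_sum fun σ _ =>
    (Differentiable.fun_finsetProd fun i _ => hB (σ i) i).const_mul _

theorem differentiable_apply_of_mulVec_eq {B : 𝕜 → Matrix n n 𝕜} {b y : 𝕜 → n → 𝕜}
    (hB : ∀ i j, Differentiable 𝕜 fun x => B x i j) (hb : ∀ i, Differentiable 𝕜 fun x => b x i)
    (hdet : ∀ x, (B x).det ≠ 0) (hy : ∀ x, B x *ᵥ y x = b x) (i : n) :
    Differentiable 𝕜 fun x => y x i := by
  have hcramer : ∀ x, y x i = ((B x).det)⁻¹ * ((B x).updateCol i (b x)).det := by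
    intro x
    have hinv : y x = (B x)⁻¹ *ᵥ b x := by
      rw [← hy x, mulVec_mulVec, nonsing_inv_mul _ (isUnit_iff_ne_zero.2 (hdet x)), one_mulVec]
    rw [hinv, inv_def, smul_mulVec, ← cramer_eq_adjugate_mulVec, Pi.smul_apply,
      cramer_apply, Ring.inverse_eq_inv', smul_eq_mul]
  simp only [hcramer]
  refine ((differentiable_det hB).inv hdet).mul (differentiable_det fun k j => ?_)
  simp only [updateCol_apply]
  split_ifs
  · exact hb k
  · exact hB k j

end Calculus

end Matrix

section MDP

variable {S A : Type*} [Fintype A]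

def policyTransition (π : S → A → ℝ) (p : S → A → S → ℝ) : Matrix S S ℝ :=
  of fun s s' => ∑ a, π s a * p s a s'

theorem differentiable_policyTransition_apply {π : ℝ → S → A → ℝ}
    (hπ : ∀ s a, Differentiable ℝ fun θ => π θ s a) (p : S → A → S → ℝ) (s s' : S) :
    Differentiable ℝ fun θ => policyTransition (π θ) p s s' := by
  simp only [policyTransition, of_apply]
  fun_prop

variable [Fintype S]

theorem policyTransition_mem_rowStochastic [DecidableEq S] {π : S → A → ℝ}
    {p : S → A → S → ℝ} (hπ0 : ∀ s a, 0 ≤ π s a) (hπ1 : ∀ s, ∑ a, π s a = 1)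
    (hp0 : ∀ s a s', 0 ≤ p s a s') (hp1 : ∀ s a, ∑ s', p s a s' = 1) :
    policyTransition π p ∈ rowStochastic ℝ S := by
  refine mem_rowStochastic_iff_sum.2 ⟨fun s s' => sum_nonneg fun a _ =>
    mul_nonneg (hπ0 s a) (hp0 s a s'), fun s => ?_⟩
  simp only [policyTransition, of_apply]
  rw [sum_comm]
  simp only [← mul_sum, hp1, mul_one, hπ1]

theorem vecMul_policyTransition_apply (π : S → A → ℝ) (p : S → A → S → ℝ) (ν : S → ℝ)
    (s' : S) : (ν ᵥ* policyTransition π p) s' = ∑ s, ∑ a, ν s * π s a * p s a s' := by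
  simp only [vecMul, dotProduct, policyTransition, of_apply, mul_sum, mul_assoc]

theorem policyTransition_mulVec_apply (π : S → A → ℝ) (p : S → A → S → ℝ) (V : S → ℝ)
    (s : S) : (policyTransition π p *ᵥ V) s = ∑ a, π s a * ∑ s', p s a s' * V s' := by
  simp only [mulVec, dotProduct, policyTransition, of_apply, sum_mul, mul_sum, mul_assoc]
  exact sum_comm

theorem one_sub_smul_policyTransition_mulVec [DecidableEq S] {γ : ℝ} {r : S → A → ℝ}
    {p : S → A → S → ℝ} {π : S → A → ℝ} {V : S → ℝ} {Q : S → A → ℝ}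
    (hQ : ∀ s a, Q s a = r s a + γ * ∑ s', p s a s' * V s')
    (hV : ∀ s, V s = ∑ a, π s a * Q s a) :
    (1 - γ • policyTransition π p) *ᵥ V = fun s => ∑ a, π s a * r s a := by
  funext s
  rw [sub_mulVec, one_mulVec, smul_mulVec, Pi.sub_apply, Pi.smul_apply,
    policyTransition_mulVec_apply, hV s, smul_eq_mul, mul_sum, ← sum_sub_distrib]
  refine sum_congr rfl fun a _ => ?_
  rw [hQ]
  ring

theorem bellman_of_hasDerivAt_value {γ : ℝ} {r : S → A → ℝ} {p : S → A → S → ℝ}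
    {π : ℝ → S → A → ℝ} {V : ℝ → S → ℝ} {Q : ℝ → S → A → ℝ} {θ₀ : ℝ} {V' : S → ℝ}
    (hQ : ∀ θ s a, Q θ s a = r s a + γ * ∑ s', p s a s' * V θ s')
    (hV : ∀ θ s, V θ s = ∑ a, π θ s a * Q θ s a)
    (hπ : ∀ s a, DifferentiableAt ℝ (fun θ => π θ s a) θ₀)
    (hV' : ∀ s, HasDerivAt (fun θ => V θ s) (V' s) θ₀) :
    V' = (fun s => ∑ a, Q θ₀ s a * deriv (fun θ => π θ s a) θ₀) +
      (γ • policyTransition (π θ₀) p) *ᵥ V' := by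
  funext s
  have hQ' : ∀ a, HasDerivAt (fun θ => Q θ s a) (γ * ∑ s', p s a s' * V' s') θ₀ := fun a => by
    simp only [hQ]
    exact ((HasDerivAt.fun_sum fun s' _ => (hV' s').const_mul (p s a s')).const_mul γ).const_add _
  have hsum : HasDerivAt (fun θ => V θ s)
      (∑ a, (deriv (fun θ => π θ s a) θ₀ * Q θ₀ s a +
        π θ₀ s a * (γ * ∑ s', p s a s' * V' s'))) θ₀ := by
    simp only [hV _ s]
    exact HasDerivAt.fun_sum fun a _ => (hπ s a).hasDerivAt.mul (hQ' a)
  rw [(hV' s).unique hsum, Pi.add_apply, smul_mulVec, Pi.smul_apply,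
    policyTransition_mulVec_apply, smul_eq_mul, mul_sum, ← sum_add_distrib]
  refine sum_congr rfl fun a _ => ?_
  ring

end MDP

section Occupancy

variable {S : Type*} [Fintype S]

theorem summable_pow_mul_of_mem_stdSimplex {γ : ℝ} (hγ0 : 0 ≤ γ) (hγ1 : γ < 1)
    {ν : ℕ → S → ℝ} (hν : ∀ t, ν t ∈ stdSimplex ℝ S) (s : S) :
    Summable fun t => γ ^ t * ν t s :=
  (summable_geometric_of_lt_one hγ0 hγ1).of_nonneg_of_le
    (fun t => mul_nonneg (pow_nonneg hγ0 t) ((hν t).1 s))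
    (fun t => mul_le_of_le_one_right (pow_nonneg hγ0 t) (mem_Icc_of_mem_stdSimplex (hν t) s).2)

theorem tsum_pow_mul_eq_add_vecMul {γ : ℝ} {P : Matrix S S ℝ} {ν : ℕ → S → ℝ}
    (hsum : ∀ s, Summable fun t => γ ^ t * ν t s) (hν : ∀ t, ν (t + 1) = ν t ᵥ* P) :
    (fun s => ∑' t, γ ^ t * ν t s) = ν 0 + (fun s => ∑' t, γ ^ t * ν t s) ᵥ* (γ • P) := by
  funext s'
  have hstep : ∀ t, γ ^ (t + 1) * ν (t + 1) s' = ∑ s, γ ^ t * ν t s * (γ • P) s s' := by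
    intro t
    simp only [hν, vecMul, dotProduct, mul_sum, Matrix.smul_apply, smul_eq_mul]
    exact sum_congr rfl fun s _ => by ring
  rw [(hsum s').tsum_eq_zero_add, pow_zero, one_mul, Pi.add_apply, tsum_congr hstep,
    Summable.tsum_finsetSum fun s _ => (hsum s).mul_right _]
  simp only [tsum_mul_right, vecMul, dotProduct]

theorem mem_stdSimplex_of_vecMul [DecidableEq S] {P : Matrix S S ℝ}
    (hP : P ∈ rowStochastic ℝ S) {ν : ℕ → S → ℝ} (hν0 : ν 0 ∈ stdSimplex ℝ S)
    (hν : ∀ t, ν (t + 1) = ν t ᵥ* P) (t : ℕ) : ν t ∈ stdSimplex ℝ S := by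
  induction t with
  | zero => exact hν0
  | succ t ih => exact hν t ▸ vecMul_mem_stdSimplex hP ih

theorem tsum_pow_mul_eq_add_vecMul_of_mem_rowStochastic [DecidableEq S] {γ : ℝ} (hγ0 : 0 ≤ γ)
    (hγ1 : γ < 1) {P : Matrix S S ℝ} (hP : P ∈ rowStochastic ℝ S) {ν : ℕ → S → ℝ}
    (hν0 : ν 0 ∈ stdSimplex ℝ S) (hν : ∀ t, ν (t + 1) = ν t ᵥ* P) :
    (fun s => ∑' t, γ ^ t * ν t s) = ν 0 + (fun s => ∑' t, γ ^ t * ν t s) ᵥ* (γ • P) :=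
  tsum_pow_mul_eq_add_vecMul
    (summable_pow_mul_of_mem_stdSimplex hγ0 hγ1 (mem_stdSimplex_of_vecMul hP hν0 hν)) hν

end Occupancy

/-- Policy gradient theorem, finite case: for a finite discounted
MDP with differentiable positive policy π_θ, the gradient of the expected return
η(θ) is ∑_s d^{π_θ}(s) ∑_a Q^{π_θ}(s,a) ∇_θ π_θ(a|s). -/
theorem stmt_18 {S A : Type*} [Fintype S] [Fintype A]
    (γ : ℝ) (hγ0 : 0 < γ) (hγ1 : γ < 1)
    (r : S → A → ℝ)
    (p : S → A → S → ℝ) (hp_nonneg : ∀ s a s', 0 ≤ p s a s')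
    (hp_sum : ∀ s a, ∑ s', p s a s' = 1)
    (ρ : S → ℝ) (hρ_nonneg : ∀ s, 0 ≤ ρ s) (hρ_sum : ∑ s, ρ s = 1)
    (π : ℝ → S → A → ℝ)
    (hπ_pos : ∀ θ s a, 0 < π θ s a) (hπ_sum : ∀ θ s, ∑ a, π θ s a = 1)
    (hπ_diff : ∀ s a, Differentiable ℝ (fun θ => π θ s a))
    (V : ℝ → S → ℝ) (Q : ℝ → S → A → ℝ)
    (hQ : ∀ θ s a, Q θ s a = r s a + γ * ∑ s', p s a s' * V θ s')
    (hV : ∀ θ s, V θ s = ∑ a, π θ s a * Q θ s a)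
    (η : ℝ → ℝ) (hη : ∀ θ, η θ = ∑ s, ρ s * V θ s)
    (θ₀ : ℝ)
    (ν : ℕ → S → ℝ)                       -- ν t s = P(s_t = s) under π_{θ₀}
    (hν0 : ∀ s, ν 0 s = ρ s)
    (hν : ∀ t s', ν (t + 1) s' = ∑ s, ∑ a, ν t s * π θ₀ s a * p s a s')
    (d : S → ℝ) (hd : ∀ s, d s = ∑' t : ℕ, γ ^ t * ν t s) :
    HasDerivAt η
      (∑ s, d s * ∑ a, Q θ₀ s a * deriv (fun θ => π θ s a) θ₀) θ₀ := by
  classical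
  set P : ℝ → Matrix S S ℝ := fun θ => policyTransition (π θ) p
  have hP : ∀ θ, P θ ∈ rowStochastic ℝ S := fun θ =>
    policyTransition_mem_rowStochastic (fun s a => (hπ_pos θ s a).le) (hπ_sum θ) hp_nonneg hp_sum
  have hV_diff : ∀ s, Differentiable ℝ fun θ => V θ s :=
    differentiable_apply_of_mulVec_eq
      (fun s s' => (differentiable_const _).sub
        ((differentiable_policyTransition_apply hπ_diff p s s').const_mul γ))
      (fun s => by fun_prop)
      (fun θ => det_one_sub_smul_ne_zero_of_mem_rowStochastic hγ0.le hγ1 (hP θ))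
      (fun θ => one_sub_smul_policyTransition_mulVec (hQ θ) (hV θ))
  have hV' := bellman_of_hasDerivAt_value hQ hV (fun s a => hπ_diff s a θ₀)
    fun s => (hV_diff s θ₀).hasDerivAt
  have hd_eq : d = ρ + d ᵥ* (γ • P θ₀) := by
    rw [funext hd, ← funext hν0]
    exact tsum_pow_mul_eq_add_vecMul_of_mem_rowStochastic hγ0.le hγ1 (hP θ₀)
      (funext hν0 ▸ ⟨hρ_nonneg, hρ_sum⟩)
      fun t => funext fun s' => by rw [hν, vecMul_policyTransition_apply]
  have hη_deriv : HasDerivAt η (ρ ⬝ᵥ fun s => deriv (fun θ => V θ s) θ₀) θ₀ := by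
    rw [funext hη]
    exact HasDerivAt.fun_sum fun s _ => (hV_diff s θ₀).hasDerivAt.const_mul (ρ s)
  rwa [dotProduct_eq_of_eq_add_vecMul_of_eq_add_mulVec hd_eq hV'] at hη_deriv
end
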